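/- Well-posedness of the boundary map: in the setting of the abstract Kreĭn formula, if R_{z₁}^B u₁ = R_{z₂}^B u₂ then (π₁*⊕1) Λ_{z₁}^B G_{z̄₁}* u₁ = (π₁*⊕1) Λ_{z₂}^B G_{z̄₂}* u₂, so that ρ_B : dom(A_B) → 𝔥₁*⊕𝔥₂* is well defined. -/

import Mathlib

/-!
Write `v = R_{z₁} u₁ + G_{z₁} φ₁ = R_{z₂} u₂ + G_{z₂} φ₂`. The identity
`G_z - G_w = (w - z) R_w G_z` shows that `G_{z₂} (φ₁ - φ₂)` lies in `dom A`, and together with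
`N_w - N_z = (z - w) G_{w̄}* G_z` that the boundary value `N_{zᵢ} φᵢ + τ R_{zᵢ} uᵢ` is the same
for both representations. The boundary condition `(1 ⊕ B₀) φᵢ = (B₁ ⊕ B₂)(N_{zᵢ} φᵢ + τ R_{zᵢ} uᵢ)`
then makes the first components of `φ₁` and `φ₂` agree. Finally, for `η = φ₁ - φ₂`, Green's
formula `⟪η, τ x⟫ = ⟪(z - A) G_z η, x⟫` with `η.fst = 0`, the density of `ker τ₂` and the density
of `ran τ₂` force `η = 0`: already `φ₁ = φ₂`.
-/

open ComplexConjugate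
noncomputable section

/-- `Rz` is the resolvent `(-A + z)⁻¹` of the (unbounded) operator `A` at `z`. -/
def IsResolventAt {H : Type*} [NormedAddCommGroup H] [InnerProductSpace ℂ H] [CompleteSpace H]
    (A : H →ₗ.[ℂ] H) (z : ℂ) (Rz : H →L[ℂ] H) : Prop :=
  (∀ u : H, ∃ hu : Rz u ∈ A.domain, z • Rz u - A ⟨Rz u, hu⟩ = u) ∧
    ∀ x : A.domain, Rz (z • (x : H) - A x) = x

/-- The block-diagonal operator `P ⊕ Q` between Hilbertian direct sums. -/
def blockDiag {h1 h2 h1' h2' : Type*}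
    [NormedAddCommGroup h1] [InnerProductSpace ℂ h1]
    [NormedAddCommGroup h2] [InnerProductSpace ℂ h2]
    [NormedAddCommGroup h1'] [InnerProductSpace ℂ h1']
    [NormedAddCommGroup h2'] [InnerProductSpace ℂ h2']
    (P : h1 →L[ℂ] h1') (Q : h2 →L[ℂ] h2') :
    WithLp 2 (h1 × h2) →L[ℂ] WithLp 2 (h1' × h2') :=
  ((WithLp.prodContinuousLinearEquiv 2 ℂ h1' h2').symm.toContinuousLinearMap.comp
      (P.prodMap Q)).comp
    (WithLp.prodContinuousLinearEquiv 2 ℂ h1 h2).toContinuousLinearMap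

/-- The pair `(φ₁, φ₂)` as an element of the Hilbertian direct sum. -/
def pairL2 {h1 h2 : Type*}
    [NormedAddCommGroup h1] [InnerProductSpace ℂ h1]
    [NormedAddCommGroup h2] [InnerProductSpace ℂ h2] (φ₁ : h1) (φ₂ : h2) :
    WithLp 2 (h1 × h2) :=
  (WithLp.prodContinuousLinearEquiv 2 ℂ h1 h2).symm (φ₁, φ₂)

local notation "⟪" x ", " y "⟫" => @inner ℂ _ _ x y

theorem IsSelfAdjoint.isFormalAdjoint_self {𝕜 H : Type*} [RCLike 𝕜] [NormedAddCommGroup H]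
    [InnerProductSpace 𝕜 H] [CompleteSpace H] {A : H →ₗ.[𝕜] H} (hA : IsSelfAdjoint A) :
    A.IsFormalAdjoint A := by
  simpa only [LinearPMap.isSelfAdjoint_def.mp hA] using
    LinearPMap.adjoint_isFormalAdjoint hA.dense_domain

theorem ContinuousLinearMap.apply_eq_of_sub_comp_eq_one {𝕜 E F K : Type*} [Ring 𝕜]
    [AddCommGroup E] [Module 𝕜 E] [TopologicalSpace E]
    [AddCommGroup F] [Module 𝕜 F] [TopologicalSpace F] [IsTopologicalAddGroup F]
    [AddCommGroup K] [Module 𝕜 K] [TopologicalSpace K]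
    {D : E →L[𝕜] F} {B : K →L[𝕜] F} {N : E →L[𝕜] K} {M : F →L[𝕜] E}
    (h : (D - B.comp N).comp M = 1) (y : K) :
    D (M (B y)) = B (N (M (B y)) + y) := by
  have := congrArg (fun f => f (B y)) h
  simp only [ContinuousLinearMap.comp_apply, sub_apply, one_apply_eq_self] at this
  rw [map_add]
  exact eq_add_of_sub_eq' this

section Resolvent

variable {H : Type*} [NormedAddCommGroup H] [InnerProductSpace ℂ H] [CompleteSpace H]
  {A : H →ₗ.[ℂ] H} {z w : ℂ} {Rz Rw : H →L[ℂ] H}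

namespace IsResolventAt

theorem apply_mem (h : IsResolventAt A z Rz) (u : H) : Rz u ∈ A.domain := (h.1 u).choose

theorem smul_sub_apply (h : IsResolventAt A z Rz) (u : H) (hu : Rz u ∈ A.domain) :
    z • Rz u - A ⟨Rz u, hu⟩ = u := (h.1 u).choose_spec

theorem sub_apply (hz : IsResolventAt A z Rz) (hw : IsResolventAt A w Rw) (u : H) :
    Rz u - Rw u = (w - z) • Rz (Rw u) := by
  set x : A.domain := ⟨Rw u, hw.apply_mem u⟩
  have hu : u = (z • (x : H) - A x) + (w - z) • (x : H) := by
    rw [← hw.smul_sub_apply u (hw.apply_mem u)]; module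
  have hRz : Rz u = x + (w - z) • Rz x := by
    conv_lhs => rw [hu, map_add, map_smul, hz.2 x]
  rw [hRz, add_sub_cancel_left]

theorem adjoint_eq (hA : A.IsFormalAdjoint A) (hz : IsResolventAt A z Rz)
    (hzc : IsResolventAt A (conj z) Rw) : Rw.adjoint = Rz := by
  refine ((ContinuousLinearMap.eq_adjoint_iff Rz Rw).mpr fun x y => ?_).symm
  set a : A.domain := ⟨Rz x, hz.apply_mem x⟩
  set b : A.domain := ⟨Rw y, hzc.apply_mem y⟩
  calc ⟪Rz x, y⟫ = conj z * ⟪(a : H), (b : H)⟫ - ⟪(a : H), A b⟫ := by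
        rw [← hzc.smul_sub_apply y b.2, inner_sub_right, inner_smul_right]
    _ = ⟪x, Rw y⟫ := by
        rw [← hz.smul_sub_apply x a.2, inner_sub_left, inner_smul_left, hA a b]

end IsResolventAt

end Resolvent

theorem blockDiag_fst {h1 h2 h1' h2' : Type*}
    [NormedAddCommGroup h1] [InnerProductSpace ℂ h1]
    [NormedAddCommGroup h2] [InnerProductSpace ℂ h2]
    [NormedAddCommGroup h1'] [InnerProductSpace ℂ h1']
    [NormedAddCommGroup h2'] [InnerProductSpace ℂ h2']
    (P : h1 →L[ℂ] h1') (Q : h2 →L[ℂ] h2') (x : WithLp 2 (h1 × h2)) :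
    (blockDiag P Q x).fst = P x.fst := rfl

def pairTrace {V h1 h2 : Type*} [AddCommGroup V] [Module ℂ V]
    [NormedAddCommGroup h1] [InnerProductSpace ℂ h1]
    [NormedAddCommGroup h2] [InnerProductSpace ℂ h2]
    (τ₁ : V →ₗ[ℂ] h1) (τ₂ : V →ₗ[ℂ] h2) : V →ₗ[ℂ] WithLp 2 (h1 × h2) :=
  (WithLp.prodContinuousLinearEquiv 2 ℂ h1 h2).symm.toLinearMap ∘ₗ τ₁.prod τ₂

/-- The data of the abstract Kreĭn formula for a symmetric operator `A` with trace `τ` on a set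
`ρ` of resolvent points: `T z = τ R_z` and the gamma field `G z = (τ R_{z̄})*`. -/
structure IsKreinSetting {H E : Type*} [NormedAddCommGroup H] [InnerProductSpace ℂ H]
    [CompleteSpace H] [NormedAddCommGroup E] [InnerProductSpace ℂ E] [CompleteSpace E]
    (A : H →ₗ.[ℂ] H) (τ : A.domain →ₗ[ℂ] E) (ρ : Set ℂ) (R : ℂ → H →L[ℂ] H)
    (T : ℂ → H →L[ℂ] E) (G : ℂ → E →L[ℂ] H) : Prop where
  isFormalAdjoint : A.IsFormalAdjoint A
  isResolventAt : ∀ z ∈ ρ, IsResolventAt A z (R z)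
  conj_mem : ∀ z ∈ ρ, conj z ∈ ρ
  trace_apply : ∀ z ∈ ρ, ∀ (u : H) (hu : R z u ∈ A.domain), T z u = τ ⟨R z u, hu⟩
  gamma_eq : ∀ z ∈ ρ, G z = (T (conj z)).adjoint

namespace IsKreinSetting

variable {H E : Type*} [NormedAddCommGroup H] [InnerProductSpace ℂ H] [CompleteSpace H]
  [NormedAddCommGroup E] [InnerProductSpace ℂ E] [CompleteSpace E]
  {A : H →ₗ.[ℂ] H} {τ : A.domain →ₗ[ℂ] E} {ρ : Set ℂ} {R : ℂ → H →L[ℂ] H}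
  {T : ℂ → H →L[ℂ] E} {G : ℂ → E →L[ℂ] H} {z w : ℂ}

theorem adjoint_gamma_conj (K : IsKreinSetting A τ ρ R T G) (hz : z ∈ ρ) :
    (G (conj z)).adjoint = T z := by
  rw [K.gamma_eq _ (K.conj_mem z hz), ContinuousLinearMap.adjoint_adjoint, Complex.conj_conj]

theorem trace_sub (K : IsKreinSetting A τ ρ R T G) (hz : z ∈ ρ) (hw : w ∈ ρ) :
    T z - T w = (w - z) • (T z).comp (R w) := by
  ext u
  have hRz := K.isResolventAt z hz
  have hRw := K.isResolventAt w hw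
  have hdom : (⟨R z u, hRz.apply_mem u⟩ - ⟨R w u, hRw.apply_mem u⟩ : A.domain)
      = (w - z) • ⟨R z (R w u), hRz.apply_mem _⟩ :=
    Subtype.ext (by simpa using hRz.sub_apply hRw u)
  simp only [sub_apply, smul_apply, ContinuousLinearMap.comp_apply,
    K.trace_apply z hz _ (hRz.apply_mem _), K.trace_apply w hw _ (hRw.apply_mem _),
    ← map_sub, ← map_smul, hdom]

theorem gamma_sub (K : IsKreinSetting A τ ρ R T G) (hz : z ∈ ρ) (hw : w ∈ ρ) :
    G z - G w = (w - z) • (R w).comp (G z) := by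
  have hRw := (K.isResolventAt w hw).adjoint_eq K.isFormalAdjoint
    (K.isResolventAt _ (K.conj_mem w hw))
  rw [K.gamma_eq z hz, K.gamma_eq w hw, ← map_sub,
    K.trace_sub (K.conj_mem z hz) (K.conj_mem w hw), map_smulₛₗ,
    ContinuousLinearMap.adjoint_comp, hRw]
  simp

/-- Green's formula for elements of the range of the gamma field lying in `dom A`. -/
theorem inner_trace (K : IsKreinSetting A τ ρ R T G) (hz : z ∈ ρ) (η : E)
    (hη : G z η ∈ A.domain) (x : A.domain) :
    ⟪η, τ x⟫ = ⟪z • G z η - A ⟨G z η, hη⟩, (x : H)⟫ := by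
  have hRc := K.isResolventAt _ (K.conj_mem z hz)
  have hx : R (conj z) (conj z • (x : H) - A x) ∈ A.domain := by rw [hRc.2 x]; exact x.2
  calc ⟪η, τ x⟫ = ⟪η, T (conj z) (conj z • (x : H) - A x)⟫ := by
        rw [K.trace_apply _ (K.conj_mem z hz) _ hx]
        exact congrArg _ (congrArg τ (Subtype.ext (hRc.2 x).symm))
    _ = ⟪G z η, conj z • (x : H) - A x⟫ := by
        rw [K.gamma_eq z hz, ContinuousLinearMap.adjoint_inner_left]
    _ = ⟪z • G z η - A ⟨G z η, hη⟩, (x : H)⟫ := by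
        rw [inner_sub_right, inner_smul_right, inner_sub_left, inner_smul_left,
          K.isFormalAdjoint ⟨G z η, hη⟩ x]

section Representation

variable {z₁ z₂ : ℂ} {u₁ u₂ : H} {φ₁ φ₂ : E}

theorem gamma_sub_apply_eq (K : IsKreinSetting A τ ρ R T G) (hz₁ : z₁ ∈ ρ) (hz₂ : z₂ ∈ ρ)
    (h : R z₁ u₁ + G z₁ φ₁ = R z₂ u₂ + G z₂ φ₂) :
    G z₂ (φ₁ - φ₂) = R z₂ u₂ - R z₁ u₁ + (z₁ - z₂) • R z₁ (G z₂ φ₁) := by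
  have hG := congrArg (fun f => f φ₁) (K.gamma_sub hz₂ hz₁)
  simp only [sub_apply, smul_apply, ContinuousLinearMap.comp_apply] at hG
  rw [map_sub, ← hG]
  linear_combination (norm := module) h

theorem gamma_sub_apply_mem (K : IsKreinSetting A τ ρ R T G) (hz₁ : z₁ ∈ ρ) (hz₂ : z₂ ∈ ρ)
    (h : R z₁ u₁ + G z₁ φ₁ = R z₂ u₂ + G z₂ φ₂) : G z₂ (φ₁ - φ₂) ∈ A.domain := by
  have hR₁ := K.isResolventAt z₁ hz₁
  rw [K.gamma_sub_apply_eq hz₁ hz₂ h]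
  exact add_mem (sub_mem ((K.isResolventAt z₂ hz₂).apply_mem _) (hR₁.apply_mem _))
    (Submodule.smul_mem _ _ (hR₁.apply_mem _))

/-- The boundary value `N z φ + T z u` of `R z u + G z φ` depends only on this vector. -/
theorem weyl_add_trace_eq (K : IsKreinSetting A τ ρ R T G) {N : ℂ → E →L[ℂ] E}
    (hN : ∀ z ∈ ρ, ∀ (φ : E) (hφ : G z φ ∈ A.domain), N z φ = τ ⟨G z φ, hφ⟩)
    (hNsub : ∀ z ∈ ρ, ∀ w ∈ ρ, N w - N z = (z - w) • ((G (conj w)).adjoint).comp (G z))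
    (hz₁ : z₁ ∈ ρ) (hz₂ : z₂ ∈ ρ) (h : R z₁ u₁ + G z₁ φ₁ = R z₂ u₂ + G z₂ φ₂) :
    N z₁ φ₁ + T z₁ u₁ = N z₂ φ₂ + T z₂ u₂ := by
  have hR₁ := K.isResolventAt z₁ hz₁
  have hR₂ := K.isResolventAt z₂ hz₂
  have hdom : (⟨G z₂ (φ₁ - φ₂), K.gamma_sub_apply_mem hz₁ hz₂ h⟩ : A.domain)
      = ⟨R z₂ u₂, hR₂.apply_mem _⟩ - ⟨R z₁ u₁, hR₁.apply_mem _⟩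
        + (z₁ - z₂) • ⟨R z₁ (G z₂ φ₁), hR₁.apply_mem _⟩ :=
    Subtype.ext (by simpa using K.gamma_sub_apply_eq hz₁ hz₂ h)
  have hNη : N z₂ (φ₁ - φ₂) = T z₂ u₂ - T z₁ u₁ + (z₁ - z₂) • T z₁ (G z₂ φ₁) := by
    rw [hN z₂ hz₂ _ (K.gamma_sub_apply_mem hz₁ hz₂ h), hdom, map_add, map_sub, map_smul,
      K.trace_apply z₂ hz₂ _ (hR₂.apply_mem _), K.trace_apply z₁ hz₁ _ (hR₁.apply_mem _),
      K.trace_apply z₁ hz₁ _ (hR₁.apply_mem _)]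
  have hNφ := congrArg (fun f => f φ₁) (hNsub z₂ hz₂ z₁ hz₁)
  simp only [sub_apply, smul_apply, ContinuousLinearMap.comp_apply,
    K.adjoint_gamma_conj hz₁] at hNφ
  rw [map_sub] at hNη
  linear_combination (norm := module) hNφ + hNη

end Representation

theorem eq_zero_of_fst_eq_zero {h1 h2 : Type*}
    [NormedAddCommGroup h1] [InnerProductSpace ℂ h1] [CompleteSpace h1]
    [NormedAddCommGroup h2] [InnerProductSpace ℂ h2] [CompleteSpace h2]
    {τ₁ : A.domain →ₗ[ℂ] h1} {τ₂ : A.domain →ₗ[ℂ] h2} {G : ℂ → WithLp 2 (h1 × h2) →L[ℂ] H}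
    {T : ℂ → H →L[ℂ] WithLp 2 (h1 × h2)} (K : IsKreinSetting A (pairTrace τ₁ τ₂) ρ R T G)
    (hker₂ : Dense {u : H | ∃ hu : u ∈ A.domain, τ₂ ⟨u, hu⟩ = 0}) (hran₂ : DenseRange τ₂)
    (hz : z ∈ ρ) {η : WithLp 2 (h1 × h2)} (hfst : η.fst = 0) (hη : G z η ∈ A.domain) :
    η = 0 := by
  have hinner : ∀ x : A.domain, ⟪η.snd, τ₂ x⟫ = ⟪z • G z η - A ⟨G z η, hη⟩, (x : H)⟫ := by
    intro x
    rw [← K.inner_trace hz η hη x]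
    simp [pairTrace, WithLp.prod_inner_apply, hfst]
  have hAη : z • G z η - A ⟨G z η, hη⟩ = 0 :=
    hker₂.eq_zero_of_inner_left ℂ fun u ⟨hu, hτu⟩ =>
      (hinner ⟨u, hu⟩).symm.trans (by simp [hτu])
  have hsnd : η.snd = 0 :=
    hran₂.eq_zero_of_inner_left ℂ fun x => by simpa [hAη] using hinner x
  exact (WithLp.ext_iff 2).mpr (Prod.ext hfst hsnd)

end IsKreinSetting

theorem statement_7_general
    {H h1 h2 h22 : Type*}
    [NormedAddCommGroup H] [InnerProductSpace ℂ H] [CompleteSpace H]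
    [NormedAddCommGroup h1] [InnerProductSpace ℂ h1] [CompleteSpace h1]
    [NormedAddCommGroup h2] [InnerProductSpace ℂ h2] [CompleteSpace h2]
    [NormedAddCommGroup h22] [InnerProductSpace ℂ h22]
    (A : H →ₗ.[ℂ] H) (hA : IsSelfAdjoint A)
    (R : ℂ → H →L[ℂ] H) (ρA : Set ℂ)
    (hρAres : ∀ z ∈ ρA, IsResolventAt A z (R z))
    (hρAconj : ∀ z ∈ ρA, conj z ∈ ρA)
    (τ₁ : A.domain →ₗ[ℂ] h1) (τ₂ : A.domain →ₗ[ℂ] h2)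
    (hker₂ : Dense {u : H | ∃ hu : u ∈ A.domain, τ₂ ⟨u, hu⟩ = 0})
    (hran₂ : DenseRange τ₂)
    (T : ℂ → H →L[ℂ] WithLp 2 (h1 × h2))
    (hT : ∀ z ∈ ρA, ∀ (u : H) (hu : R z u ∈ A.domain),
      T z u = pairL2 (τ₁ ⟨R z u, hu⟩) (τ₂ ⟨R z u, hu⟩))
    (G : ℂ → WithLp 2 (h1 × h2) →L[ℂ] H)
    (hG : ∀ z ∈ ρA, G z = (T (conj z)).adjoint)
    (N : ℂ → WithLp 2 (h1 × h2) →L[ℂ] WithLp 2 (h1 × h2))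
    (hNext : ∀ z ∈ ρA, ∀ (φ : WithLp 2 (h1 × h2)) (hφ : G z φ ∈ A.domain),
      N z φ = pairL2 (τ₁ ⟨G z φ, hφ⟩) (τ₂ ⟨G z φ, hφ⟩))
    (hNdiff : ∀ z ∈ ρA, ∀ w ∈ ρA,
      N w - N z = (z - w) • (((G (conj w)).adjoint).comp (G z)))
    (B₀ : h2 →L[ℂ] h22) (B₁ : h1 →L[ℂ] h1) (B₂ : h2 →L[ℂ] h22)
    (Minv : ℂ → WithLp 2 (h1 × h22) →L[ℂ] WithLp 2 (h1 × h2))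
    (ZB : Set ℂ)
    (hZB : ZB = {z ∈ ρA | ∀ w ∈ ({z, conj z} : Set ℂ),
      (Minv w).comp (blockDiag (1 : h1 →L[ℂ] h1) B₀ - (blockDiag B₁ B₂).comp (N w)) = 1 ∧
      (blockDiag (1 : h1 →L[ℂ] h1) B₀ - (blockDiag B₁ B₂).comp (N w)).comp (Minv w) = 1})
    (P1 : h1 →L[ℂ] h1)
    :
    ∀ z₁ ∈ ZB, ∀ z₂ ∈ ZB, ∀ u₁ u₂ : H,
      (R z₁ + ((G z₁).comp ((Minv z₁).comp (blockDiag B₁ B₂))).comp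
          ((G (conj z₁)).adjoint)) u₁
        = (R z₂ + ((G z₂).comp ((Minv z₂).comp (blockDiag B₁ B₂))).comp
          ((G (conj z₂)).adjoint)) u₂ →
      blockDiag P1 (1 : h2 →L[ℂ] h2)
          ((Minv z₁) ((blockDiag B₁ B₂) ((G (conj z₁)).adjoint u₁)))
        = blockDiag P1 (1 : h2 →L[ℂ] h2)
          ((Minv z₂) ((blockDiag B₁ B₂) ((G (conj z₂)).adjoint u₂))) := by
  intro z₁ hz₁ z₂ hz₂ u₁ u₂ heq
  have K : IsKreinSetting A (pairTrace τ₁ τ₂) ρA R T G :=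
    ⟨hA.isFormalAdjoint_self, hρAres, hρAconj, hT, hG⟩
  obtain ⟨hρ₁, hM₁⟩ := hZB ▸ hz₁
  obtain ⟨hρ₂, hM₂⟩ := hZB ▸ hz₂
  rw [K.adjoint_gamma_conj hρ₁, K.adjoint_gamma_conj hρ₂] at heq ⊢
  set φ₁ := Minv z₁ (blockDiag B₁ B₂ (T z₁ u₁))
  set φ₂ := Minv z₂ (blockDiag B₁ B₂ (T z₂ u₂))
  have hrep : R z₁ u₁ + G z₁ φ₁ = R z₂ u₂ + G z₂ φ₂ := heq
  have hbc₁ := ContinuousLinearMap.apply_eq_of_sub_comp_eq_one (hM₁ z₁ (Set.mem_insert _ _)).2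
    (T z₁ u₁)
  have hbc₂ := ContinuousLinearMap.apply_eq_of_sub_comp_eq_one (hM₂ z₂ (Set.mem_insert _ _)).2
    (T z₂ u₂)
  have hD : blockDiag (1 : h1 →L[ℂ] h1) B₀ φ₁ = blockDiag 1 B₀ φ₂ := by
    rw [hbc₁, hbc₂, K.weyl_add_trace_eq hNext hNdiff hρ₁ hρ₂ hrep]
  have hfst : (φ₁ - φ₂).fst = 0 := by
    rw [WithLp.sub_fst, sub_eq_zero]
    simpa only [blockDiag_fst, one_apply_eq_self] using congrArg WithLp.fst hD
  rw [sub_eq_zero.mp (K.eq_zero_of_fst_eq_zero hker₂ hran₂ hρ₂ hfst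
    (K.gamma_sub_apply_mem hρ₁ hρ₂ hrep))]

/-- **well-posedness of the boundary map `ρ_B`.** In the abstract Kreĭn setting,
if `R^B_{z₁} u₁ = R^B_{z₂} u₂` then
`(π₁* ⊕ 1) Λ_{z₁}^B G_{z̄₁}* u₁ = (π₁* ⊕ 1) Λ_{z₂}^B G_{z̄₂}* u₂`, so that
`ρ_B : dom A_B → 𝔥₁* ⊕ 𝔥₂*` is well defined. -/
theorem statement_7
    {H h1 h2 h22 : Type*}
    [NormedAddCommGroup H] [InnerProductSpace ℂ H] [CompleteSpace H]
    [NormedAddCommGroup h1] [InnerProductSpace ℂ h1] [CompleteSpace h1]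
    [NormedAddCommGroup h2] [InnerProductSpace ℂ h2] [CompleteSpace h2]
    [NormedAddCommGroup h22] [InnerProductSpace ℂ h22] [CompleteSpace h22]
    (A : H →ₗ.[ℂ] H) (hA : IsSelfAdjoint A)
    (R : ℂ → H →L[ℂ] H) (ρA : Set ℂ)
    (hρA : ρA = {z : ℂ | ∃ Q : H →L[ℂ] H, IsResolventAt A z Q})
    (hρAres : ∀ z ∈ ρA, IsResolventAt A z (R z))
    (hρAconj : ∀ z ∈ ρA, conj z ∈ ρA)
    (τ₁ : A.domain →ₗ[ℂ] h1) (τ₂ : A.domain →ₗ[ℂ] h2)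
    (hτbdd : ∃ C : ℝ, ∀ x : A.domain, ‖τ₁ x‖ + ‖τ₂ x‖ ≤ C * (‖(x : H)‖ + ‖A x‖))
    (hker₂ : Dense {u : H | ∃ hu : u ∈ A.domain, τ₂ ⟨u, hu⟩ = 0})
    (hran₂ : DenseRange τ₂)
    (T : ℂ → H →L[ℂ] WithLp 2 (h1 × h2))
    (hT : ∀ z ∈ ρA, ∀ (u : H) (hu : R z u ∈ A.domain),
      T z u = pairL2 (τ₁ ⟨R z u, hu⟩) (τ₂ ⟨R z u, hu⟩))
    (G : ℂ → WithLp 2 (h1 × h2) →L[ℂ] H)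
    (hG : ∀ z ∈ ρA, G z = (T (conj z)).adjoint)
    (N : ℂ → WithLp 2 (h1 × h2) →L[ℂ] WithLp 2 (h1 × h2))
    (hNext : ∀ z ∈ ρA, ∀ (φ : WithLp 2 (h1 × h2)) (hφ : G z φ ∈ A.domain),
      N z φ = pairL2 (τ₁ ⟨G z φ, hφ⟩) (τ₂ ⟨G z φ, hφ⟩))
    (hNadj : ∀ z ∈ ρA, (N z).adjoint = N (conj z))
    (hNdiff : ∀ z ∈ ρA, ∀ w ∈ ρA,
      N w - N z = (z - w) • (((G (conj w)).adjoint).comp (G z)))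
    (B₀ : h2 →L[ℂ] h22) (B₁ : h1 →L[ℂ] h1) (B₂ : h2 →L[ℂ] h22)
    (hB₁ : IsSelfAdjoint B₁) (hB₀₂ : B₀.comp B₂.adjoint = B₂.comp B₀.adjoint)
    (Minv : ℂ → WithLp 2 (h1 × h22) →L[ℂ] WithLp 2 (h1 × h2))
    (ZB : Set ℂ)
    (hZB : ZB = {z ∈ ρA | ∀ w ∈ ({z, conj z} : Set ℂ),
      (Minv w).comp (blockDiag (1 : h1 →L[ℂ] h1) B₀ - (blockDiag B₁ B₂).comp (N w)) = 1 ∧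
      (blockDiag (1 : h1 →L[ℂ] h1) B₀ - (blockDiag B₁ B₂).comp (N w)).comp (Minv w) = 1})
    (hZBne : ZB.Nonempty)
    (AB : H →ₗ.[ℂ] H) (hAB : IsSelfAdjoint AB)
    (hABres : ∀ z ∈ ZB, IsResolventAt AB z
      (R z + ((G z).comp ((Minv z).comp (blockDiag B₁ B₂))).comp ((G (conj z)).adjoint)))
    (P1 : h1 →L[ℂ] h1) (hP1sa : IsSelfAdjoint P1) (hP1idem : P1.comp P1 = P1)
    (hP1mem : ∀ y : h1, P1 y ∈ closure (Set.range fun x : A.domain => τ₁ x))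
    (hP1fix : ∀ y ∈ closure (Set.range fun x : A.domain => τ₁ x), P1 y = y)
    :
    ∀ z₁ ∈ ZB, ∀ z₂ ∈ ZB, ∀ u₁ u₂ : H,
      (R z₁ + ((G z₁).comp ((Minv z₁).comp (blockDiag B₁ B₂))).comp
          ((G (conj z₁)).adjoint)) u₁
        = (R z₂ + ((G z₂).comp ((Minv z₂).comp (blockDiag B₁ B₂))).comp
          ((G (conj z₂)).adjoint)) u₂ →
      blockDiag P1 (1 : h2 →L[ℂ] h2)
          ((Minv z₁) ((blockDiag B₁ B₂) ((G (conj z₁)).adjoint u₁)))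
        = blockDiag P1 (1 : h2 →L[ℂ] h2)
          ((Minv z₂) ((blockDiag B₁ B₂) ((G (conj z₂)).adjoint u₂))) :=
  statement_7_general A hA R ρA hρAres hρAconj τ₁ τ₂ hker₂ hran₂ T hT G hG N hNext hNdiff B₀ B₁ B₂
    Minv ZB hZB P1
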